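/- Let p, q ∈ ℝⁿ, ω ∈ S^{n−1}, and r ∈ ℝ. Set p′ = p + rω, q′ = q − rω, p′⁰ = √(c²+|p′|²), q′⁰ = √(c²+|q′|²). Then −(p⁰+q⁰)⁴ + 2(p⁰+q⁰)²((p′⁰)² + (q′⁰)²) − ((p′⁰)² − (q′⁰)²)² = 4D₁r² − 8D₂r, where D₁ = (p⁰+q⁰)² − (ω·(p+q))² and D₂ = (p⁰+q⁰){ω·(p⁰q − q⁰p)}. -/

import Mathlib

noncomputable section

open MeasureTheory Metric Matrix

namespace RelBoltz

/-- The energy `p⁰ = √(c² + |p|²)` of a relativistic particle with momentum `p ∈ ℝⁿ`. -/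
def energy (n : ℕ) (c : ℝ) (p : EuclideanSpace ℝ (Fin n)) : ℝ :=
  Real.sqrt (c ^ 2 + ‖p‖ ^ 2)

/-- The Euclidean dot product on `ℝⁿ`. -/
def dot (n : ℕ) (p q : EuclideanSpace ℝ (Fin n)) : ℝ := ∑ i, p i * q i

/-- The relative momentum `ϱ(p,q) = √(2(p⁰q⁰ − p·q − c²))`. -/
def relMom (n : ℕ) (c : ℝ) (p q : EuclideanSpace ℝ (Fin n)) : ℝ :=
  Real.sqrt (2 * (energy n c p * energy n c q - dot n p q - c ^ 2))

/-- The quantity `s(p,q) = 2(p⁰q⁰ − p·q + c²)`. -/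
def sQ (n : ℕ) (c : ℝ) (p q : EuclideanSpace ℝ (Fin n)) : ℝ :=
  2 * (energy n c p * energy n c q - dot n p q + c ^ 2)

/-- The Minkowski metric `g = diag(−1, 1, …, 1)` as a `(1+n)×(1+n)` matrix. -/
def eta (n : ℕ) : Matrix (Fin (n + 1)) (Fin (n + 1)) ℝ :=
  Matrix.diagonal fun μ => if μ = 0 then -1 else 1

/-- A proper Lorentz transformation: `det Λ = 1` and `Λᵀ g Λ = g`. -/
def IsLorentz (n : ℕ) (Λ : Matrix (Fin (n + 1)) (Fin (n + 1)) ℝ) : Prop :=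
  Λ.det = 1 ∧ Λᵀ * eta n * Λ = eta n

/-- The four-vector `p^μ = (p⁰, p) ∈ ℝ^{1+n}`. -/
def fourVec (n : ℕ) (c : ℝ) (p : EuclideanSpace ℝ (Fin n)) : Fin (n + 1) → ℝ :=
  Fin.cons (energy n c p) fun i => p i

/-- Condition (CM): `Λ^μ_ν (p^ν + q^ν) = (√s, 0, …, 0)`. -/
def CM (n : ℕ) (c : ℝ) (Λ : Matrix (Fin (n + 1)) (Fin (n + 1)) ℝ)
    (p q : EuclideanSpace ℝ (Fin n)) : Prop :=
  Λ.mulVec (fourVec n c p + fourVec n c q) = Fin.cons (Real.sqrt (sQ n c p q)) (fun _ => (0 : ℝ))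

/-- The candidate inverse `g Λᵀ g` of a Lorentz transformation. -/
def Linv (n : ℕ) (Λ : Matrix (Fin (n + 1)) (Fin (n + 1)) ℝ) :
    Matrix (Fin (n + 1)) (Fin (n + 1)) ℝ :=
  eta n * Λᵀ * eta n

/-- The quantity `ρ = (p⁰+q⁰)/√s` appearing in the boost matrix. -/
def rhoB (n : ℕ) (c : ℝ) (p q : EuclideanSpace ℝ (Fin n)) : ℝ :=
  (energy n c p + energy n c q) / Real.sqrt (sQ n c p q)

/-- The boost matrix `Λ_b = [[ρ, −ρ vᵀ], [−ρ v, Iₙ + (ρ−1) v vᵀ/|v|²]]`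
with `v = (p+q)/(p⁰+q⁰)`. -/
def boost (n : ℕ) (c : ℝ) (p q : EuclideanSpace ℝ (Fin n)) :
    Matrix (Fin (n + 1)) (Fin (n + 1)) ℝ :=
  Matrix.of fun μ ν =>
    Fin.cases
      (Fin.cases (rhoB n c p q)
        (fun j => -rhoB n c p q * ((p j + q j) / (energy n c p + energy n c q))) ν)
      (fun i =>
        Fin.cases (-rhoB n c p q * ((p i + q i) / (energy n c p + energy n c q)))
          (fun j =>
            (if i = j then (1 : ℝ) else 0) +
              (rhoB n c p q - 1) *
                ((p i + q i) / (energy n c p + energy n c q)) *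
                ((p j + q j) / (energy n c p + energy n c q)) /
                (∑ k, ((p k + q k) / (energy n c p + energy n c q)) ^ 2)) ν) μ

/-- The vector `k ∈ ℝⁿ`, `k^i = Λ^i_μ (p^μ − q^μ)` (spatial rows of `Λ` applied
to `p^μ − q^μ`). -/
def kvec (n : ℕ) (c : ℝ) (Λ : Matrix (Fin (n + 1)) (Fin (n + 1)) ℝ)
    (p q : EuclideanSpace ℝ (Fin n)) : EuclideanSpace ℝ (Fin n) :=
  WithLp.toLp 2 (fun (i : Fin n) => Λ.mulVec (fourVec n c p - fourVec n c q) i.succ)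

/-- `ω̄^μ = (√s/2, (ϱ/2)ω)`. -/
def wbar (n : ℕ) (c : ℝ) (p q ω : EuclideanSpace ℝ (Fin n)) : Fin (n + 1) → ℝ :=
  Fin.cons (Real.sqrt (sQ n c p q) / 2) fun i => (relMom n c p q / 2) * ω i

/-- `ω̃^μ = (√s/2, −(ϱ/2)ω)`. -/
def wtil (n : ℕ) (c : ℝ) (p q ω : EuclideanSpace ℝ (Fin n)) : Fin (n + 1) → ℝ :=
  Fin.cons (Real.sqrt (sQ n c p q) / 2) fun i => -(relMom n c p q / 2) * ω i

/-- The center-of-momentum post-collisional four-vector `p′^μ = (Λ⁻¹)^μ_ν ω̄^ν`. -/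
def postP (n : ℕ) (c : ℝ) (Λ : Matrix (Fin (n + 1)) (Fin (n + 1)) ℝ)
    (p q ω : EuclideanSpace ℝ (Fin n)) : Fin (n + 1) → ℝ :=
  (Linv n Λ).mulVec (wbar n c p q ω)

/-- The center-of-momentum post-collisional four-vector `q′^μ = (Λ⁻¹)^μ_ν ω̃^ν`. -/
def postQ (n : ℕ) (c : ℝ) (Λ : Matrix (Fin (n + 1)) (Fin (n + 1)) ℝ)
    (p q ω : EuclideanSpace ℝ (Fin n)) : Fin (n + 1) → ℝ :=
  (Linv n Λ).mulVec (wtil n c p q ω)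

/-- The spatial part of a vector in `ℝ^{1+n}`. -/
def spat (n : ℕ) (u : Fin (n + 1) → ℝ) : EuclideanSpace ℝ (Fin n) :=
  WithLp.toLp 2 (fun (i : Fin n) => u i.succ)

/-- `D₁ = (p⁰+q⁰)² − (ω·(p+q))²`. -/
def D1 (n : ℕ) (c : ℝ) (p q ω : EuclideanSpace ℝ (Fin n)) : ℝ :=
  (energy n c p + energy n c q) ^ 2 - dot n ω (p + q) ^ 2

/-- `D₂ = (p⁰+q⁰){ω·(p⁰q − q⁰p)}`. -/
def D2 (n : ℕ) (c : ℝ) (p q ω : EuclideanSpace ℝ (Fin n)) : ℝ :=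
  (energy n c p + energy n c q) * dot n ω (energy n c p • q - energy n c q • p)

/-- `a(p,q,ω) = 2(p⁰+q⁰){ω·(p⁰q − q⁰p)}/D₁`. -/
def aGS (n : ℕ) (c : ℝ) (p q ω : EuclideanSpace ℝ (Fin n)) : ℝ :=
  2 * (energy n c p + energy n c q) * dot n ω (energy n c p • q - energy n c q • p) /
    D1 n c p q ω

/-- `N⁰(p,q,ω) = 2{ω·(p+q)}{ω·(p⁰q − q⁰p)}/D₁`. -/
def N0 (n : ℕ) (c : ℝ) (p q ω : EuclideanSpace ℝ (Fin n)) : ℝ :=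
  2 * dot n ω (p + q) * dot n ω (energy n c p • q - energy n c q • p) / D1 n c p q ω

/-- The Glassey–Strauss post-collisional momentum `p′ = p + a(p,q,ω)ω`. -/
def gsP (n : ℕ) (c : ℝ) (p q ω : EuclideanSpace ℝ (Fin n)) : EuclideanSpace ℝ (Fin n) :=
  p + aGS n c p q ω • ω

/-- The Glassey–Strauss post-collisional momentum `q′ = q − a(p,q,ω)ω`. -/
def gsQ (n : ℕ) (c : ℝ) (p q ω : EuclideanSpace ℝ (Fin n)) : EuclideanSpace ℝ (Fin n) :=
  q - aGS n c p q ω • ω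

/-- The Glassey–Strauss kernel `B(p,q,ω)`. -/
def BGS (n : ℕ) (c : ℝ) (p q ω : EuclideanSpace ℝ (Fin n)) : ℝ :=
  c * (energy n c p + energy n c q) ^ 2 * energy n c p * energy n c q *
    |dot n ω ((energy n c p)⁻¹ • p - (energy n c q)⁻¹ • q)| / D1 n c p q ω ^ 2

/-- The dimensional factor `A(p,q,ω)`. -/
def AGS (n : ℕ) (c : ℝ) (p q ω : EuclideanSpace ℝ (Fin n)) : ℝ :=
  (4 / relMom n c p q) * (energy n c p + energy n c q) * energy n c p * energy n c q *
    |dot n ω ((energy n c p)⁻¹ • p - (energy n c q)⁻¹ • q)| / D1 n c p q ω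

/-- The dimensional Glassey–Strauss kernel `B_n(p,q,ω) = B(p,q,ω)·(A(p,q,ω))^{n−3}`. -/
def Bn (n : ℕ) (c : ℝ) (p q ω : EuclideanSpace ℝ (Fin n)) : ℝ :=
  BGS n c p q ω * AGS n c p q ω ^ ((n : ℤ) - 3)

/-- The Møller velocity `v_ø(p,q) = (c/4) ϱ √s / (p⁰q⁰)`. -/
def moller (n : ℕ) (c : ℝ) (p q : EuclideanSpace ℝ (Fin n)) : ℝ :=
  (c / 4) * relMom n c p q * Real.sqrt (sQ n c p q) / (energy n c p * energy n c q)

/-- The explicit boost form of the combination appearing in the center-of-momentum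
post-collisional momenta. -/
def cmDir (n : ℕ) (c : ℝ) (p q ω : EuclideanSpace ℝ (Fin n)) : EuclideanSpace ℝ (Fin n) :=
  ω + ((rhoB n c p q - 1) * dot n (p + q) ω / ‖p + q‖ ^ 2) • (p + q)

/-- The explicit boost form of the center-of-momentum post-collisional momentum `p′`. -/
def cmP (n : ℕ) (c : ℝ) (p q ω : EuclideanSpace ℝ (Fin n)) : EuclideanSpace ℝ (Fin n) :=
  (1 / 2 : ℝ) • (p + q) + (relMom n c p q / 2) • cmDir n c p q ω

/-- The explicit boost form of the center-of-momentum post-collisional momentum `q′`. -/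
def cmQ (n : ℕ) (c : ℝ) (p q ω : EuclideanSpace ℝ (Fin n)) : EuclideanSpace ℝ (Fin n) :=
  (1 / 2 : ℝ) • (p + q) - (relMom n c p q / 2) • cmDir n c p q ω

/-- The explicit boost form of the vector `k`. -/
def kB (n : ℕ) (c : ℝ) (p q : EuclideanSpace ℝ (Fin n)) : EuclideanSpace ℝ (Fin n) :=
  (-(energy n c p - energy n c q) / Real.sqrt (sQ n c p q)) • (p + q) + (p - q) +
    ((rhoB n c p q - 1) * dot n (p + q) (p - q) / ‖p + q‖ ^ 2) • (p + q)

/-- The center-of-momentum scattering angle `cos θ_cm = (k/|k|)·ω`. -/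
def cosCM (n : ℕ) (c : ℝ) (p q ω : EuclideanSpace ℝ (Fin n)) : ℝ :=
  dot n (kB n c p q) ω / ‖kB n c p q‖

/-- The Glassey–Strauss scattering angle
`cos θ_gs = 1 − 8{ω·(p⁰q − q⁰p)}²/(D₁ϱ²)`. -/
def cosGS (n : ℕ) (c : ℝ) (p q ω : EuclideanSpace ℝ (Fin n)) : ℝ :=
  1 - 8 * dot n ω (energy n c p • q - energy n c q • p) ^ 2 /
    (D1 n c p q ω * relMom n c p q ^ 2)

/-- The surface measure on the unit sphere `S^{n−1} ⊂ ℝⁿ`. -/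
def sphMeasure (n : ℕ) : Measure (sphere (0 : EuclideanSpace ℝ (Fin n)) 1) :=
  (volume : Measure (EuclideanSpace ℝ (Fin n))).toSphere

theorem dot_eq_inner {n : ℕ} (p q : EuclideanSpace ℝ (Fin n)) : dot n p q = inner ℝ p q := by
  simp [dot, PiLp.inner_apply, mul_comm]

theorem energy_sq {n : ℕ} (c : ℝ) (p : EuclideanSpace ℝ (Fin n)) :
    energy n c p ^ 2 = c ^ 2 + ‖p‖ ^ 2 :=
  Real.sq_sqrt (by positivity)

theorem energy_add_smul_sq {n : ℕ} (c : ℝ) (p ω : EuclideanSpace ℝ (Fin n)) (hω : ‖ω‖ = 1)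
    (r : ℝ) : energy n c (p + r • ω) ^ 2 = energy n c p ^ 2 + 2 * r * dot n ω p + r ^ 2 := by
  rw [energy_sq, energy_sq, norm_add_sq_real, inner_smul_right, norm_smul, mul_pow, hω,
    dot_eq_inner, real_inner_comm]
  simp only [Real.norm_eq_abs, sq_abs]
  ring

theorem energy_sub_smul_sq {n : ℕ} (c : ℝ) (q ω : EuclideanSpace ℝ (Fin n)) (hω : ‖ω‖ = 1)
    (r : ℝ) : energy n c (q - r • ω) ^ 2 = energy n c q ^ 2 - 2 * r * dot n ω q + r ^ 2 := by
  rw [sub_eq_add_neg, ← neg_smul, energy_add_smul_sq c q ω hω]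
  ring

theorem dot_energy_smul_sub {n : ℕ} (c : ℝ) (p q ω : EuclideanSpace ℝ (Fin n)) :
    dot n ω (energy n c p • q - energy n c q • p)
      = energy n c p * dot n ω q - energy n c q * dot n ω p := by
  simp only [dot_eq_inner, inner_sub_right, inner_smul_right]

theorem statement10_general (n : ℕ) (c : ℝ)
    (p q : EuclideanSpace ℝ (Fin n)) (ω : EuclideanSpace ℝ (Fin n)) (hω : ‖ω‖ = 1)
    (r : ℝ) :
    -(energy n c p + energy n c q) ^ 4 +
      2 * (energy n c p + energy n c q) ^ 2 *
        (energy n c (p + r • ω) ^ 2 + energy n c (q - r • ω) ^ 2) -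
      (energy n c (p + r • ω) ^ 2 - energy n c (q - r • ω) ^ 2) ^ 2 =
    4 * D1 n c p q ω * r ^ 2 - 8 * D2 n c p q ω * r := by
  have hω_sum : dot n ω (p + q) = dot n ω p + dot n ω q := by
    simp only [dot_eq_inner, inner_add_right]
  rw [energy_add_smul_sq c p ω hω, energy_sub_smul_sq c q ω hω, D1, D2, hω_sum,
    dot_energy_smul_sub]
  -- a polynomial identity in `p⁰`, `q⁰`, `ω·p`, `ω·q`
  ring

/-- with `p′ = p + rω`, `q′ = q − rω`, one has
`−(p⁰+q⁰)⁴ + 2(p⁰+q⁰)²((p′⁰)² + (q′⁰)²) − ((p′⁰)² − (q′⁰)²)² = 4D₁r² − 8D₂r`. -/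
theorem statement10 (n : ℕ) (hn : 2 ≤ n) (c : ℝ) (hc : 0 < c)
    (p q : EuclideanSpace ℝ (Fin n)) (ω : EuclideanSpace ℝ (Fin n)) (hω : ‖ω‖ = 1)
    (r : ℝ) :
    -(energy n c p + energy n c q) ^ 4 +
      2 * (energy n c p + energy n c q) ^ 2 *
        (energy n c (p + r • ω) ^ 2 + energy n c (q - r • ω) ^ 2) -
      (energy n c (p + r • ω) ^ 2 - energy n c (q - r • ω) ^ 2) ^ 2 =
    4 * D1 n c p q ω * r ^ 2 - 8 * D2 n c p q ω * r :=
  statement10_general n c p q ω hω r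

end RelBoltz
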